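/- Let θ ∈ ℝ, let G be a finite simple graph, let a be a θ-positive vertex of G, and let u ≠ a be a θ-neutral vertex of G. Then u is not θ-positive in G−a: mult(θ, (G−a)−u) ≠ mult(θ, G−a) + 1. -/

import Mathlib

open Polynomial

/-- The matching polynomial of a finite simple graph `G`:
`μ(G,z) = ∑_k (-1)^k p(k,G) z^(n-2k)`, written as a sum over all matchings
(finsets of pairwise disjoint edges). -/
noncomputable def matchingPolynomial {V : Type*} [Finite V] (G : SimpleGraph V) :
    Polynomial ℝ := by
  classical
  have : Fintype V := Fintype.ofFinite V
  exact ∑ M ∈ Finset.univ.filter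
      (fun M : Finset (Sym2 V) =>
        (∀ e ∈ M, e ∈ G.edgeSet) ∧ ∀ e ∈ M, ∀ f ∈ M, e ≠ f → ∀ v, v ∈ e → v ∉ f),
    (-1 : Polynomial ℝ) ^ M.card * X ^ (Nat.card V - 2 * M.card)

/-- `matchMult θ G` is the multiplicity of `θ` as a root of the matching polynomial
of `G` (equal to `0` if `θ` is not a root). -/
noncomputable def matchMult {V : Type*} [Finite V] (θ : ℝ) (G : SimpleGraph V) : ℕ :=
  Polynomial.rootMultiplicity θ (matchingPolynomial G)

/-- A vertex `u` is `θ`-essential if `mult(θ, G-u) = mult(θ, G) - 1`. -/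
def IsEssential {V : Type*} [Finite V] (θ : ℝ) (G : SimpleGraph V) (u : V) : Prop :=
  matchMult θ (G.induce {v | v ≠ u}) + 1 = matchMult θ G

/-- A vertex `u` is `θ`-positive if `mult(θ, G-u) = mult(θ, G) + 1`. -/
def IsPositive {V : Type*} [Finite V] (θ : ℝ) (G : SimpleGraph V) (u : V) : Prop :=
  matchMult θ (G.induce {v | v ≠ u}) = matchMult θ G + 1

/-- A vertex `u` is `θ`-neutral if `mult(θ, G-u) = mult(θ, G)`. -/
def IsNeutral {V : Type*} [Finite V] (θ : ℝ) (G : SimpleGraph V) (u : V) : Prop :=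
  matchMult θ (G.induce {v | v ≠ u}) = matchMult θ G

/-- A vertex is `θ`-special if it is not `θ`-essential but has a `θ`-essential neighbor. -/
def IsSpecial {V : Type*} [Finite V] (θ : ℝ) (G : SimpleGraph V) (u : V) : Prop :=
  ¬ IsEssential θ G u ∧ ∃ w, G.Adj u w ∧ IsEssential θ G w

/-- The outer vertex boundary `∂S`: vertices not in `S` with a neighbor in `S`. -/
def vertexBoundary {V : Type*} (G : SimpleGraph V) (S : Set V) : Set V :=
  {v | v ∉ S ∧ ∃ w ∈ S, G.Adj v w}

open Finset

namespace MatchAux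

variable {V : Type*} [Fintype V]

/-- `M` is a matching of `G` supported inside the vertex set `s`. -/
def Good (G : SimpleGraph V) (s : Finset V) (M : Finset (Sym2 V)) : Prop :=
  (∀ e ∈ M, e ∈ G.edgeSet) ∧ (∀ e ∈ M, ∀ f ∈ M, e ≠ f → ∀ v, v ∈ e → v ∉ f) ∧
    (∀ e ∈ M, ∀ v ∈ e, v ∈ s)

noncomputable def mset (G : SimpleGraph V) (s : Finset V) : Finset (Finset (Sym2 V)) := by
  classical exact Finset.univ.filter (Good G s)

lemma mem_mset {G : SimpleGraph V} {s : Finset V} {M : Finset (Sym2 V)} :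
    M ∈ mset G s ↔ Good G s M := by
  classical
  simp [mset]

noncomputable def mp (G : SimpleGraph V) (s : Finset V) : Polynomial ℝ :=
  ∑ M ∈ mset G s, (-1 : Polynomial ℝ) ^ M.card * X ^ (s.card - 2 * M.card)

lemma matchingPolynomial_eq_mp (G : SimpleGraph V) :
    matchingPolynomial G = mp G Finset.univ := by
  classical
  rw [matchingPolynomial, mp]
  have hinst : Fintype.ofFinite V = ‹Fintype V› := Subsingleton.elim _ _
  refine Finset.sum_bij (fun M _ => M) ?_ ?_ ?_ ?_
  · intro M hM
    rw [mem_mset]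
    simp only [Finset.mem_filter] at hM
    exact ⟨hM.2.1, hM.2.2, fun e _ v _ => Finset.mem_univ v⟩
  · intro a ha b hb h; exact h
  · intro M hM
    rw [mem_mset] at hM
    refine ⟨M, ?_, rfl⟩
    simp only [Finset.mem_filter]
    exact ⟨by simp, hM.1, hM.2.1⟩
  · intro M hM
    congr 1
    rw [Nat.card_eq_fintype_card, Finset.card_univ]


lemma mp_map {V' : Type*} [Fintype V'] [DecidableEq V] (G' : SimpleGraph V')
    (G : SimpleGraph V) (φ : V' → V) (hφ : Function.Injective φ)
    (hadj : ∀ a b, G'.Adj a b ↔ G.Adj (φ a) (φ b)) (t : Finset V') :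
    mp G' t = mp G (t.image φ) := by
  classical
  have hsym : Function.Injective (Sym2.map φ) := Sym2.map.injective hφ
  rw [mp, mp]
  refine Finset.sum_bij (fun M _ => M.image (Sym2.map φ)) ?_ ?_ ?_ ?_
  · intro M hM
    rw [mem_mset] at hM ⊢
    obtain ⟨he, hd, hs⟩ := hM
    refine ⟨?_, ?_, ?_⟩
    · intro e he'
      simp only [Finset.mem_image] at he'
      obtain ⟨e0, he0, rfl⟩ := he'
      induction e0 with
      | h x y =>
        rw [Sym2.map_pair_eq, SimpleGraph.mem_edgeSet, ← hadj]
        exact he _ he0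
    · intro e heM f hfM hef v hve hvf
      simp only [Finset.mem_image] at heM hfM
      obtain ⟨e0, he0, rfl⟩ := heM
      obtain ⟨f0, hf0, rfl⟩ := hfM
      rw [Sym2.mem_map] at hve hvf
      obtain ⟨x, hx, rfl⟩ := hve
      obtain ⟨y, hy, hxy⟩ := hvf
      have : x = y := hφ hxy.symm
      subst this
      exact hd e0 he0 f0 hf0 (fun h => hef (by rw [h])) x hx hy
    · intro e heM v hv
      simp only [Finset.mem_image] at heM
      obtain ⟨e0, he0, rfl⟩ := heM
      rw [Sym2.mem_map] at hv
      obtain ⟨x, hx, rfl⟩ := hv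
      exact Finset.mem_image_of_mem φ (hs e0 he0 x hx)
  · intro a _ b _ h
    exact Finset.image_injective hsym h
  · intro N hN
    rw [mem_mset] at hN
    obtain ⟨he, hd, hs⟩ := hN
    have hrange : ∀ e ∈ N, e ∈ Set.range (Sym2.map φ) := by
      intro e heN
      induction e with
      | h x y =>
        have hx : x ∈ t.image φ := hs _ heN x (by simp)
        have hy : y ∈ t.image φ := hs _ heN y (by simp)
        simp only [Finset.mem_image] at hx hy
        obtain ⟨x0, _, rfl⟩ := hx
        obtain ⟨y0, _, rfl⟩ := hy
        exact ⟨s(x0, y0), Sym2.map_pair_eq _ _ _⟩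
    refine ⟨N.preimage (Sym2.map φ) hsym.injOn, ?_, ?_⟩
    · rw [mem_mset]
      refine ⟨?_, ?_, ?_⟩
      · intro e heM
        rw [Finset.mem_preimage] at heM
        induction e with
        | h x y =>
          rw [SimpleGraph.mem_edgeSet, hadj]
          rw [Sym2.map_pair_eq] at heM
          exact he _ heM
      · intro e heM f hfM hef v hve hvf
        rw [Finset.mem_preimage] at heM hfM
        exact hd _ heM _ hfM (fun h => hef (hsym h)) (φ v)
          (Sym2.mem_map.mpr ⟨v, hve, rfl⟩) (Sym2.mem_map.mpr ⟨v, hvf, rfl⟩)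
      · intro e heM v hv
        rw [Finset.mem_preimage] at heM
        have : φ v ∈ t.image φ :=
          hs _ heM (φ v) (Sym2.mem_map.mpr ⟨v, hv, rfl⟩)
        simp only [Finset.mem_image] at this
        obtain ⟨w, hw, hwv⟩ := this
        rwa [← hφ hwv]
    · show Finset.image (Sym2.map φ) (N.preimage (Sym2.map φ) hsym.injOn) = N
      rw [Finset.image_preimage]
      exact Finset.filter_true_of_mem hrange
  · intro M hM
    show _ = (-1 : Polynomial ℝ) ^ (M.image (Sym2.map φ)).card *
      X ^ ((t.image φ).card - 2 * (M.image (Sym2.map φ)).card)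
    rw [Finset.card_image_of_injective M hsym, Finset.card_image_of_injective t hφ]
lemma card_filter_mem_sym2 [DecidableEq V] {e : Sym2 V} (he : ¬ e.IsDiag) :
    (Finset.univ.filter (fun v => v ∈ e)).card = 2 := by
  induction e with
  | h a b =>
    have hab : a ≠ b := by simpa using he
    have : (Finset.univ.filter (fun v => v ∈ s(a, b))) = {a, b} := by
      ext v; simp [Sym2.mem_iff]
    rw [this, Finset.card_pair hab]

lemma Good.two_mul_card_le {G : SimpleGraph V} {s : Finset V} {M : Finset (Sym2 V)}
    (h : Good G s M) : 2 * M.card ≤ s.card := by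
  classical
  obtain ⟨he, hd, hs⟩ := h
  have hdisj : (M : Set (Sym2 V)).PairwiseDisjoint
      (fun e => Finset.univ.filter (fun v => v ∈ e)) := by
    intro e heM f hfM hef
    refine Finset.disjoint_left.mpr ?_
    intro v hv hv'
    simp only [Finset.mem_filter] at hv hv'
    exact hd e heM f hfM hef v hv.2 hv'.2
  have hcard : (M.biUnion (fun e => Finset.univ.filter (fun v => v ∈ e))).card
      = ∑ e ∈ M, (Finset.univ.filter (fun v => v ∈ e)).card :=
    Finset.card_biUnion hdisj
  have hsub : M.biUnion (fun e => Finset.univ.filter (fun v => v ∈ e)) ⊆ s := by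
    intro v hv
    simp only [Finset.mem_biUnion, Finset.mem_filter] at hv
    obtain ⟨e, heM, _, hv⟩ := hv
    exact hs e heM v hv
  have h2 : ∑ e ∈ M, (Finset.univ.filter (fun v => v ∈ e)).card = 2 * M.card := by
    rw [Finset.sum_congr rfl (fun e heM =>
      card_filter_mem_sym2 (G.not_isDiag_of_mem_edgeSet (he e heM)))]
    simp [mul_comm]
  calc 2 * M.card = _ := h2.symm
    _ = _ := hcard.symm
    _ ≤ s.card := Finset.card_le_card hsub

lemma empty_mem_mset (G : SimpleGraph V) (s : Finset V) : ∅ ∈ mset G s := by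
  rw [mem_mset]
  refine ⟨?_, ?_, ?_⟩ <;> intro e he <;> simp at he

lemma mp_coeff_card (G : SimpleGraph V) (s : Finset V) : (mp G s).coeff s.card = 1 := by
  classical
  rw [mp, finset_sum_coeff]
  rw [Finset.sum_eq_single ∅]
  · simp
  · intro M hM hMne
    rw [mem_mset] at hM
    have h1 : 0 < 2 * M.card := by
      have := Finset.card_pos.mpr (Finset.nonempty_iff_ne_empty.mpr hMne)
      omega
    have h2 : 0 < s.card := by
      obtain ⟨e, heM⟩ := Finset.nonempty_iff_ne_empty.mpr hMne
      obtain ⟨v, hv⟩ := e.exists_rep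
      have : v.1 ∈ e := by rw [← hv]; exact Sym2.mem_mk_left _ _
      exact Finset.card_pos.mpr ⟨v.1, hM.2.2 e heM v.1 this⟩
    have h3 : s.card - 2 * M.card ≠ s.card := by omega
    have : ((-1 : Polynomial ℝ) ^ M.card * X ^ (s.card - 2 * M.card))
        = C ((-1 : ℝ) ^ M.card) * X ^ (s.card - 2 * M.card) := by
      simp
    rw [this, coeff_C_mul, coeff_X_pow, if_neg (Ne.symm h3), mul_zero]
  · intro h
    exact absurd (empty_mem_mset G s) h

lemma mp_ne_zero (G : SimpleGraph V) (s : Finset V) : mp G s ≠ 0 := by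
  intro h
  have := mp_coeff_card G s
  rw [h] at this
  simp at this

lemma mp_rec [DecidableEq V] (G : SimpleGraph V) [DecidableRel G.Adj] (s : Finset V) (u : V) (hu : u ∈ s) :
    mp G s = X * mp G (s.erase u)
      - ∑ v ∈ (s.erase u).filter (fun v => G.Adj u v), mp G ((s.erase u).erase v) := by
  classical
  set N := (s.erase u).filter (fun v => G.Adj u v) with hN
  have hsplit := (Finset.sum_filter_add_sum_filter_not (mset G s)
    (fun M => ∀ e ∈ M, u ∉ e)
    (fun M => (-1 : Polynomial ℝ) ^ M.card * X ^ (s.card - 2 * M.card))).symm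
  -- Part 1 : uncovered matchings
  have h1 : (mset G s).filter (fun M => ∀ e ∈ M, u ∉ e) = mset G (s.erase u) := by
    ext M
    simp only [Finset.mem_filter, mem_mset]
    constructor
    · rintro ⟨⟨he, hd, hs'⟩, hnc⟩
      refine ⟨he, hd, fun e heM v hv => Finset.mem_erase.mpr ⟨?_, hs' e heM v hv⟩⟩
      intro hvu
      exact hnc e heM (hvu ▸ hv)
    · rintro ⟨he, hd, hs'⟩
      refine ⟨⟨he, hd, fun e heM v hv => Finset.mem_of_mem_erase (hs' e heM v hv)⟩, ?_⟩
      intro e heM hue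
      exact (Finset.mem_erase.mp (hs' e heM u hue)).1 rfl
  have h1' : ∑ M ∈ mset G (s.erase u),
      (-1 : Polynomial ℝ) ^ M.card * X ^ (s.card - 2 * M.card)
      = X * mp G (s.erase u) := by
    rw [mp, Finset.mul_sum]
    refine Finset.sum_congr rfl fun M hM => ?_
    have hle : 2 * M.card ≤ (s.erase u).card := (mem_mset.mp hM).two_mul_card_le
    have hce : (s.erase u).card = s.card - 1 := Finset.card_erase_of_mem hu
    have hs1 : 1 ≤ s.card := Finset.card_pos.mpr ⟨u, hu⟩
    have hexp : s.card - 2 * M.card = ((s.erase u).card - 2 * M.card) + 1 := by omega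
    rw [hexp, pow_succ]
    ring
  -- Part 2 : covered matchings
  have h2 : (mset G s).filter (fun M => ¬ ∀ e ∈ M, u ∉ e)
      = N.biUnion (fun v => (mset G s).filter (fun M => s(u, v) ∈ M)) := by
    ext M
    simp only [Finset.mem_biUnion, Finset.mem_filter, mem_mset, hN, Finset.mem_erase]
    constructor
    · rintro ⟨hGood, hcov⟩
      push_neg at hcov
      obtain ⟨e, heM, hue⟩ := hcov
      have hspec := Sym2.other_spec hue
      set v := Sym2.Mem.other hue with hv
      have heE : e ∈ G.edgeSet := hGood.1 e heM
      have hadj : G.Adj u v := by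
        rw [← SimpleGraph.mem_edgeSet, hspec]
        exact heE
      refine ⟨v, ⟨⟨hadj.ne', hGood.2.2 e heM v (by rw [← hspec]; exact Sym2.mem_mk_right _ _)⟩,
        hadj⟩, hGood, by rw [hspec]; exact heM⟩
    · rintro ⟨v, _, hGood, heM⟩
      refine ⟨hGood, ?_⟩
      push_neg
      exact ⟨s(u, v), heM, by simp⟩
  have hdisj : ∀ v1 ∈ N, ∀ v2 ∈ N, v1 ≠ v2 →
      Disjoint ((mset G s).filter (fun M => s(u, v1) ∈ M))
        ((mset G s).filter (fun M => s(u, v2) ∈ M)) := by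
    intro v1 _ v2 _ hne
    refine Finset.disjoint_left.mpr ?_
    intro M hM1 hM2
    simp only [Finset.mem_filter, mem_mset] at hM1 hM2
    have hedge : s(u, v1) ≠ s(u, v2) := by
      intro h
      exact hne (Sym2.congr_right.mp h)
    exact hM1.1.2.1 s(u, v1) hM1.2 s(u, v2) hM2.2 hedge u (by simp) (by simp)
  have hinner : ∀ v ∈ N, ∑ M ∈ (mset G s).filter (fun M => s(u, v) ∈ M),
      (-1 : Polynomial ℝ) ^ M.card * X ^ (s.card - 2 * M.card)
      = - mp G ((s.erase u).erase v) := by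
    intro v hvN
    simp only [hN, Finset.mem_filter, Finset.mem_erase] at hvN
    obtain ⟨⟨hvu, hvs⟩, hadj⟩ := hvN
    rw [mp, ← Finset.sum_neg_distrib]
    refine Finset.sum_bij' (fun M _ => M.erase s(u, v)) (fun M' _ => insert s(u, v) M')
      ?_ ?_ ?_ ?_ ?_
    · intro M hM
      simp only [Finset.mem_filter, mem_mset] at hM
      obtain ⟨⟨he, hd, hs'⟩, he0⟩ := hM
      rw [mem_mset]
      refine ⟨fun e heM => he e (Finset.mem_of_mem_erase heM),
        fun e heM f hfM hef w hwe => hd e (Finset.mem_of_mem_erase heM) f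
          (Finset.mem_of_mem_erase hfM) hef w hwe, ?_⟩
      intro f hfM w hwf
      obtain ⟨hfne, hfM'⟩ := Finset.mem_erase.mp hfM
      have hws : w ∈ s := hs' f hfM' w hwf
      have hwnot : w ∉ s(u, v) := hd f hfM' s(u, v) he0 hfne w hwf
      simp only [Sym2.mem_iff, not_or] at hwnot
      exact Finset.mem_erase.mpr ⟨hwnot.2, Finset.mem_erase.mpr ⟨hwnot.1, hws⟩⟩
    · intro M' hM'
      rw [mem_mset] at hM'
      obtain ⟨he, hd, hs'⟩ := hM'
      have hnot : ∀ f ∈ M', ∀ w ∈ f, w ≠ u ∧ w ≠ v := by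
        intro f hf w hw
        have := hs' f hf w hw
        simp only [Finset.mem_erase] at this
        exact ⟨this.2.1, this.1⟩
      simp only [Finset.mem_filter, mem_mset]
      refine ⟨⟨?_, ?_, ?_⟩, Finset.mem_insert_self _ _⟩
      · intro e heM
        rcases Finset.mem_insert.mp heM with rfl | h
        · exact G.mem_edgeSet.mpr hadj
        · exact he e h
      · intro e heM f hfM hef w hwe hwf
        rcases Finset.mem_insert.mp heM with rfl | heM' <;>
          rcases Finset.mem_insert.mp hfM with rfl | hfM'
        · exact hef rfl
        · rcases Sym2.mem_iff.mp hwe with rfl | rfl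
          · exact (hnot f hfM' w hwf).1 rfl
          · exact (hnot f hfM' w hwf).2 rfl
        · rcases Sym2.mem_iff.mp hwf with rfl | rfl
          · exact (hnot e heM' w hwe).1 rfl
          · exact (hnot e heM' w hwe).2 rfl
        · exact hd e heM' f hfM' hef w hwe hwf
      · intro e heM w hwe
        rcases Finset.mem_insert.mp heM with rfl | heM'
        · rcases Sym2.mem_iff.mp hwe with rfl | rfl
          · exact hu
          · exact hvs
        · exact Finset.mem_of_mem_erase (Finset.mem_of_mem_erase (hs' e heM' w hwe))
    · intro M hM
      simp only [Finset.mem_filter] at hM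
      exact Finset.insert_erase hM.2
    · intro M' hM'
      rw [mem_mset] at hM'
      have : s(u, v) ∉ M' := by
        intro hmem
        have := hM'.2.2 s(u, v) hmem u (by simp)
        simp only [Finset.mem_erase] at this
        exact this.2.1 rfl
      exact Finset.erase_insert this
    · intro M hM
      simp only [Finset.mem_filter, mem_mset] at hM
      obtain ⟨hGood, he0⟩ := hM
      have hc1 : 1 ≤ M.card := Finset.card_pos.mpr ⟨s(u, v), he0⟩
      have hcard : (M.erase s(u, v)).card = M.card - 1 := Finset.card_erase_of_mem he0
      have hle : 2 * M.card ≤ s.card := hGood.two_mul_card_le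
      have hce : ((s.erase u).erase v).card = s.card - 2 := by
        rw [Finset.card_erase_of_mem (Finset.mem_erase.mpr ⟨hvu, hvs⟩),
          Finset.card_erase_of_mem hu]
        omega
      have hexp : ((s.erase u).erase v).card - 2 * (M.erase s(u, v)).card
          = s.card - 2 * M.card := by omega
      have hpow : M.card = (M.erase s(u, v)).card + 1 := by omega
      rw [hexp, hpow, pow_succ]
      ring
  have h2' : ∑ M ∈ (mset G s).filter (fun M => ¬ ∀ e ∈ M, u ∉ e),
      (-1 : Polynomial ℝ) ^ M.card * X ^ (s.card - 2 * M.card)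
      = - ∑ v ∈ N, mp G ((s.erase u).erase v) := by
    rw [h2, Finset.sum_biUnion hdisj, Finset.sum_congr rfl hinner, Finset.sum_neg_distrib]
  rw [mp, hsplit, h1, h1', h2']
  ring

/-- Sums of squares of real polynomials. -/
def IsSOS (q : Polynomial ℝ) : Prop :=
  ∃ S : Multiset (Polynomial ℝ), q = (S.map (fun p => p ^ 2)).sum

lemma IsSOS.zero : IsSOS 0 := ⟨0, by simp⟩

lemma IsSOS.sq (p : Polynomial ℝ) : IsSOS (p ^ 2) := ⟨{p}, by simp⟩

lemma IsSOS.add {q r : Polynomial ℝ} (hq : IsSOS q) (hr : IsSOS r) : IsSOS (q + r) := by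
  obtain ⟨S, rfl⟩ := hq
  obtain ⟨T, rfl⟩ := hr
  exact ⟨S + T, by rw [Multiset.map_add, Multiset.sum_add]⟩

lemma IsSOS.sum {ι : Type*} {t : Finset ι} {f : ι → Polynomial ℝ}
    (h : ∀ i ∈ t, IsSOS (f i)) : IsSOS (∑ i ∈ t, f i) :=
  Finset.sum_induction f IsSOS (fun _ _ => IsSOS.add) IsSOS.zero h

lemma IsSOS.eval_nonneg {q : Polynomial ℝ} (hq : IsSOS q) (y : ℝ) : 0 ≤ q.eval y := by
  obtain ⟨S, rfl⟩ := hq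
  induction S using Multiset.induction_on with
  | empty => simp
  | cons p S ih =>
    simp only [Multiset.map_cons, Multiset.sum_cons, eval_add, eval_pow]
    exact add_nonneg (sq_nonneg _) ih

lemma not_dvd_of_sq_add_sos {p q x : Polynomial ℝ} {θ : ℝ} (hp : p ≠ 0) (hx : IsSOS x)
    (hq : q = p ^ 2 + x) : ¬ (X - C θ) ^ (2 * rootMultiplicity θ p + 1) ∣ q := by
  intro hdvd
  set m := rootMultiplicity θ p with hm
  obtain ⟨r, hr⟩ := hdvd
  set c := p /ₘ (X - C θ) ^ m with hc
  have hpc : (X - C θ) ^ m * c = p := pow_mul_divByMonic_rootMultiplicity_eq p θ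
  have hcθ : c.eval θ ≠ 0 := eval_divByMonic_pow_rootMultiplicity_ne_zero θ hp
  set t := (X - C θ) * r - c ^ 2 with ht
  have hx' : x = (X - C θ) ^ (2 * m) * t := by
    have h1 : x = q - p ^ 2 := by rw [hq]; ring
    rw [h1, hr, ← hpc, ht]
    ring
  have htθ : t.eval θ < 0 := by
    have h1 : t.eval θ = -(c.eval θ) ^ 2 := by simp [ht]
    rw [h1, neg_lt, neg_zero]
    exact lt_of_le_of_ne (sq_nonneg _) (Ne.symm (pow_ne_zero 2 hcθ))
  obtain ⟨y, hyne, hyt⟩ : ∃ y, y ≠ θ ∧ t.eval y < 0 := by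
    have hcont : ContinuousAt (fun y => t.eval y) θ := t.continuous.continuousAt
    obtain ⟨δ, hδ, hball⟩ := Metric.continuousAt_iff.mp hcont (-(t.eval θ)) (by linarith)
    refine ⟨θ + δ / 2, ne_of_gt (by linarith), ?_⟩
    have hd : dist (θ + δ / 2) θ < δ := by
      rw [Real.dist_eq]
      rw [abs_of_pos (by linarith : (0:ℝ) < θ + δ / 2 - θ)]
      linarith
    have := hball hd
    rw [Real.dist_eq, abs_lt] at this
    linarith
  have hxy : x.eval y < 0 := by
    rw [hx', eval_mul, eval_pow, eval_sub, eval_X, eval_C]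
    have hpos : 0 < (y - θ) ^ (2 * m) :=
      Even.pow_pos (even_two_mul m) (sub_ne_zero.mpr hyne)
    exact mul_neg_of_pos_of_neg hpos hyt
  exact absurd (hx.eval_nonneg y) (not_le.mpr hxy)

lemma sq_add_sos_facts {p q x : Polynomial ℝ} {θ : ℝ} (hp : p ≠ 0) (hx : IsSOS x)
    (hq : q = p ^ 2 + x) :
    q ≠ 0 ∧ rootMultiplicity θ q ≤ 2 * rootMultiplicity θ p := by
  have hnd := not_dvd_of_sq_add_sos hp hx hq (θ := θ)
  have hq0 : q ≠ 0 := fun h => hnd (h ▸ dvd_zero _)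
  exact ⟨hq0, (rootMultiplicity_le_iff hq0 θ _).mpr hnd⟩

lemma dvd_derivative_of_pow_dvd {θ : ℝ} {p : Polynomial ℝ} {m : ℕ}
    (h : (X - C θ) ^ m ∣ p) : (X - C θ) ^ (m - 1) ∣ derivative p := by
  cases m with
  | zero => simp
  | succ k =>
    obtain ⟨r, rfl⟩ := h
    rw [derivative_mul, derivative_X_sub_C_pow]
    simp only [Nat.add_sub_cancel]
    exact dvd_add ((dvd_rfl.mul_left _).mul_right _)
      ((pow_dvd_pow _ (Nat.le_succ k)).mul_right _)

noncomputable def fP [DecidableEq V] (G : SimpleGraph V) (s : Finset V) (u : V) :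
    Polynomial ℝ :=
  mp G (s.erase u) * derivative (mp G s) - mp G s * derivative (mp G (s.erase u))

lemma fP_sos [DecidableEq V] (G : SimpleGraph V) :
    ∀ (n : ℕ) (s : Finset V), s.card = n → ∀ u ∈ s,
      ∃ x, IsSOS x ∧ fP G s u = (mp G (s.erase u)) ^ 2 + x := by
  intro n
  induction n using Nat.strong_induction_on with
  | _ n IH =>
    intro s hs u hus
    classical
    set N := (s.erase u).filter (fun v => G.Adj u v) with hN
    have hrec : mp G s = X * mp G (s.erase u)
        - ∑ v ∈ N, mp G ((s.erase u).erase v) := mp_rec G s u hus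
    have hder : derivative (mp G s) = mp G (s.erase u)
        + X * derivative (mp G (s.erase u))
        - ∑ v ∈ N, derivative (mp G ((s.erase u).erase v)) := by
      rw [hrec, derivative_sub, derivative_mul, derivative_X, derivative_sum]
      ring
    have e1 : ∑ v ∈ N, fP G (s.erase u) v
        = (∑ v ∈ N, mp G ((s.erase u).erase v)) * derivative (mp G (s.erase u))
          - mp G (s.erase u) * ∑ v ∈ N, derivative (mp G ((s.erase u).erase v)) := by
      simp only [fP]
      rw [Finset.sum_sub_distrib, Finset.sum_mul, Finset.mul_sum]
    have key : fP G s u = (mp G (s.erase u)) ^ 2 + ∑ v ∈ N, fP G (s.erase u) v := by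
      rw [fP, hder, hrec, e1]
      ring
    have hlt : (s.erase u).card < n := by
      rw [Finset.card_erase_of_mem hus]
      have : 1 ≤ s.card := Finset.card_pos.mpr ⟨u, hus⟩
      omega
    have hIH : ∀ v ∈ N, ∃ x, IsSOS x ∧
        fP G (s.erase u) v = (mp G ((s.erase u).erase v)) ^ 2 + x := by
      intro v hv
      exact IH (s.erase u).card hlt (s.erase u) rfl v (Finset.mem_of_mem_filter v hv)
    choose xs hxs1 hxs2 using hIH
    refine ⟨∑ v ∈ N.attach, ((mp G ((s.erase u).erase v.1)) ^ 2 + xs v.1 v.2), ?_, ?_⟩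
    · exact IsSOS.sum fun v _ => (IsSOS.sq _).add (hxs1 v.1 v.2)
    · rw [key]
      congr 1
      rw [← Finset.sum_attach N (fun v => fP G (s.erase u) v)]
      exact Finset.sum_congr rfl fun v _ => hxs2 v.1 v.2

/-- Deleting a vertex decreases the root multiplicity by at most one. -/
lemma mult_le_mult_erase_add_one [DecidableEq V] (θ : ℝ) (G : SimpleGraph V)
    (s : Finset V) (u : V) (hu : u ∈ s) :
    rootMultiplicity θ (mp G s) ≤ rootMultiplicity θ (mp G (s.erase u)) + 1 := by
  classical
  set m := rootMultiplicity θ (mp G s) with hm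
  set k := rootMultiplicity θ (mp G (s.erase u)) with hk
  rcases Nat.eq_zero_or_pos m with h0 | hpos
  · omega
  obtain ⟨x, hx, hfp⟩ := fP_sos G s.card s rfl u hu
  have hA : mp G (s.erase u) ≠ 0 := mp_ne_zero G (s.erase u)
  obtain ⟨hfne, hford⟩ := sq_add_sos_facts (θ := θ) hA hx hfp
  have hdvd1 : (X - C θ) ^ (k + (m - 1)) ∣ mp G (s.erase u) * derivative (mp G s) := by
    rw [pow_add]
    exact mul_dvd_mul (pow_rootMultiplicity_dvd _ θ)
      (dvd_derivative_of_pow_dvd (pow_rootMultiplicity_dvd _ θ))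
  have hdvd2 : (X - C θ) ^ (m + (k - 1)) ∣ mp G s * derivative (mp G (s.erase u)) := by
    rw [pow_add]
    exact mul_dvd_mul (pow_rootMultiplicity_dvd _ θ)
      (dvd_derivative_of_pow_dvd (pow_rootMultiplicity_dvd _ θ))
  have hdvd : (X - C θ) ^ (k + m - 1) ∣ fP G s u := by
    rw [fP]
    exact dvd_sub ((pow_dvd_pow _ (by omega)).trans hdvd1)
      ((pow_dvd_pow _ (by omega)).trans hdvd2)
  have hle : k + m - 1 ≤ rootMultiplicity θ (fP G s u) :=
    (le_rootMultiplicity_iff hfne).mpr hdvd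
  omega

/-- Deleting a vertex increases the root multiplicity by at most one. -/
lemma mult_erase_le_mult_add_one [DecidableEq V] (θ : ℝ) (G : SimpleGraph V)
    (s : Finset V) (u : V) (hu : u ∈ s) :
    rootMultiplicity θ (mp G (s.erase u)) ≤ rootMultiplicity θ (mp G s) + 1 := by
  classical
  set m := rootMultiplicity θ (mp G s) with hm
  set k := rootMultiplicity θ (mp G (s.erase u)) with hk
  have hdvd0 : (X - C θ) ^ (k - 1) ∣ X * mp G (s.erase u) :=
    Dvd.dvd.mul_left ((pow_dvd_pow _ (Nat.sub_le _ _)).trans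
      (pow_rootMultiplicity_dvd _ θ)) X
  have hdvdv : ∀ v ∈ (s.erase u).filter (fun v => G.Adj u v),
      (X - C θ) ^ (k - 1) ∣ mp G ((s.erase u).erase v) := by
    intro v hv
    have hvmem : v ∈ s.erase u := Finset.mem_of_mem_filter v hv
    have hB := mult_le_mult_erase_add_one θ G (s.erase u) v hvmem
    exact (pow_dvd_pow _ (by omega)).trans (pow_rootMultiplicity_dvd _ θ)
  have hdvd : (X - C θ) ^ (k - 1) ∣ mp G s := by
    rw [mp_rec G s u hu]
    exact dvd_sub hdvd0 (Finset.dvd_sum hdvdv)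
  have := (le_rootMultiplicity_iff (mp_ne_zero G s)).mpr hdvd
  omega

lemma matchingPolynomial_induce [DecidableEq V] (G : SimpleGraph V) (A : Set V)
    [Fintype ↥A] :
    matchingPolynomial (G.induce A) = mp G (Finset.univ.image (Subtype.val : ↥A → V)) := by
  rw [matchingPolynomial_eq_mp (G.induce A),
    mp_map (G.induce A) G Subtype.val Subtype.val_injective (fun x y => Iff.rfl)]


end MatchAux

-- statement 13
open MatchAux in
theorem neutral_not_positive_after_deleting_positive {V : Type*} [Finite V] (θ : ℝ)
    (G : SimpleGraph V) (a : V) (ha : IsPositive θ G a)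
    (u : V) (hu : u ≠ a) (hneu : IsNeutral θ G u) :
    ¬ IsPositive θ (G.induce {v | v ≠ a}) ⟨u, hu⟩ := by
  classical
  letI : Fintype V := Fintype.ofFinite V
  intro hpos
  set A : Set V := {v | v ≠ a} with hA
  set B : Set ↥A := {w | w ≠ (⟨u, hu⟩ : ↥A)} with hB
  -- translate all matching polynomials to `mp G` over explicit finsets
  have him1 : (Finset.univ.image (Subtype.val : ↥A → V)) = Finset.univ.erase a := by
    ext x
    simp only [Finset.mem_image, Finset.mem_erase, Finset.mem_univ, and_true]
    constructor
    · rintro ⟨w, _, rfl⟩; exact w.2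
    · intro hx; exact ⟨⟨x, hx⟩, trivial, rfl⟩
  have him1u : (Finset.univ.image (Subtype.val : ↥{v : V | v ≠ u} → V))
      = Finset.univ.erase u := by
    ext x
    simp only [Finset.mem_image, Finset.mem_erase, Finset.mem_univ, and_true]
    constructor
    · rintro ⟨w, _, rfl⟩; exact w.2
    · intro hx; exact ⟨⟨x, hx⟩, trivial, rfl⟩
  have him2 : ((Finset.univ.image (Subtype.val : ↥B → ↥A)).image (Subtype.val : ↥A → V))
      = (Finset.univ.erase a).erase u := by
    ext x
    simp only [Finset.mem_image, Finset.mem_erase, Finset.mem_univ, and_true]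
    constructor
    · rintro ⟨w, ⟨w', _, rfl⟩, rfl⟩
      refine ⟨?_, w'.1.2⟩
      intro hxu
      exact w'.2 (Subtype.ext hxu)
    · rintro ⟨hxu, hxa⟩
      refine ⟨⟨x, hxa⟩, ⟨⟨⟨x, hxa⟩, ?_⟩, trivial, rfl⟩, rfl⟩
      intro h
      exact hxu (congrArg Subtype.val h)
  have t1 : matchMult θ (G.induce A) = Polynomial.rootMultiplicity θ (mp G (Finset.univ.erase a)) := by
    rw [matchMult, matchingPolynomial_induce G A, him1]
  have t1u : matchMult θ (G.induce {v : V | v ≠ u})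
      = Polynomial.rootMultiplicity θ (mp G (Finset.univ.erase u)) := by
    rw [matchMult, matchingPolynomial_induce G {v : V | v ≠ u}, him1u]
  have t2 : matchMult θ ((G.induce A).induce B)
      = Polynomial.rootMultiplicity θ (mp G ((Finset.univ.erase a).erase u)) := by
    rw [matchMult, matchingPolynomial_induce (G.induce A) B,
      mp_map (G.induce A) G Subtype.val Subtype.val_injective (fun x y => Iff.rfl), him2]
  -- the interlacing bound applied inside `G - u`
  have hbound := mult_erase_le_mult_add_one θ G (Finset.univ.erase u) a
    (Finset.mem_erase.mpr ⟨Ne.symm hu, Finset.mem_univ a⟩)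
  rw [Finset.erase_right_comm] at hbound
  -- put the hypotheses together
  rw [IsPositive] at hpos ha
  rw [IsNeutral] at hneu
  rw [t2, t1] at hpos
  rw [t1] at ha
  rw [t1u] at hneu
  rw [matchMult] at ha hneu
  rw [matchingPolynomial_eq_mp G] at ha hneu
  omega
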